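/- Let X and Y be nonempty compact ultrametric spaces. Define the interleaving distance d_I(X,Y) := inf over pairs of maps φ : X → Y and ψ : Y → X of max( dis_I(φ), dis_I(ψ), codis_I(φ,ψ) ), where dis_I(φ) := sup_{x,x'∈X} ( u_Y(φ(x),φ(x')) − u_X(x,x') ), dis_I(ψ) := sup_{y,y'∈Y} ( u_X(ψ(y),ψ(y')) − u_Y(y,y') ), and codis_I(φ,ψ) := (1/2) · max( sup_{x∈X} u_X(x, ψ(φ(x))), sup_{y∈Y} u_Y(y, φ(ψ(y))) ). Then (1/2)·d_I(X,Y) ≤ d_GH(X,Y) ≤ d_I(X,Y). -/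
import Mathlib


noncomputable section

/-- A correspondence between `X` and `Y`. -/
def IsCorrespondence {X Y : Type*} (R : Set (X × Y)) : Prop :=
  (∀ x : X, ∃ y : Y, (x, y) ∈ R) ∧ ∀ y : Y, ∃ x : X, (x, y) ∈ R

/-- The Gromov–Hausdorff distance
`d_GH(X,Y) = (1/2) · inf_R sup_{(x,y),(x',y') ∈ R} |d_X(x,x') - d_Y(y,y')|`. -/
def dGH (X Y : Type) [MetricSpace X] [MetricSpace Y] : ℝ :=
  (1 / 2) * sInf {r : ℝ | ∃ R : Set (X × Y), IsCorrespondence R ∧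
    r = sSup {s : ℝ | ∃ a ∈ R, ∃ b ∈ R, s = |dist a.1 b.1 - dist a.2 b.2|}}

/-- The interleaving distance between (compact) ultrametric spaces:
`d_I(X,Y) = inf_{φ,ψ} max(dis_I(φ), dis_I(ψ), codis_I(φ,ψ))`. -/
def dI (X Y : Type) [MetricSpace X] [MetricSpace Y] : ℝ :=
  ⨅ φ : X → Y, ⨅ ψ : Y → X,
    max (max (⨆ x : X, ⨆ x' : X, (dist (φ x) (φ x') - dist x x'))
             (⨆ y : Y, ⨆ y' : Y, (dist (ψ y) (ψ y') - dist y y')))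
        ((1 / 2) * max (⨆ x : X, dist x (ψ (φ x))) (⨆ y : Y, dist y (φ (ψ y))))

private lemma sup2_spec {α : Type*} [Nonempty α] (f : α → α → ℝ) (C : ℝ)
    (hC : ∀ a b, f a b ≤ C) :
    (∀ a b, f a b ≤ ⨆ a, ⨆ b, f a b) ∧ (⨆ a, ⨆ b, f a b) ≤ C := by
  have hb : ∀ a, BddAbove (Set.range (f a)) := fun a => ⟨C, by rintro _ ⟨b, rfl⟩; exact hC a b⟩
  have h1 : ∀ a, (⨆ b, f a b) ≤ C := fun a => ciSup_le (fun b => hC a b)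
  have hb2 : BddAbove (Set.range fun a => ⨆ b, f a b) :=
    ⟨C, by rintro _ ⟨a, rfl⟩; exact h1 a⟩
  exact ⟨fun a b => le_trans (le_ciSup (hb a) b) (le_ciSup hb2 a), ciSup_le h1⟩

private lemma sup1_spec {α : Type*} [Nonempty α] (f : α → ℝ) (C : ℝ) (hC : ∀ a, f a ≤ C) :
    (∀ a, f a ≤ ⨆ a, f a) ∧ (⨆ a, f a) ≤ C :=
  ⟨fun a => le_ciSup ⟨C, by rintro _ ⟨b, rfl⟩; exact hC b⟩ a, ciSup_le hC⟩

/-- Bi-Lipschitz equivalence of the interleaving distance with the Gromov–Hausdorff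
distance on nonempty compact ultrametric spaces:
`(1/2)·d_I(X,Y) ≤ d_GH(X,Y) ≤ d_I(X,Y)`. -/
theorem dI_biLipschitz_dGH (X Y : Type)
    [MetricSpace X] [CompactSpace X] [Nonempty X]
    [MetricSpace Y] [CompactSpace Y] [Nonempty Y]
    (hX : ∀ x y z : X, dist x z ≤ max (dist x y) (dist y z))
    (hY : ∀ x y z : Y, dist x z ≤ max (dist x y) (dist y z)) :
    (1 / 2) * dI X Y ≤ dGH X Y ∧ dGH X Y ≤ dI X Y := by
  classical
  obtain ⟨DX, hDX'⟩ := Metric.isBounded_iff.1 (isCompact_univ (X := X)).isBounded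
  obtain ⟨DY, hDY'⟩ := Metric.isBounded_iff.1 (isCompact_univ (X := Y)).isBounded
  have hDX : ∀ x x' : X, dist x x' ≤ DX := fun x x' => hDX' trivial trivial
  have hDY : ∀ y y' : Y, dist y y' ≤ DY := fun y y' => hDY' trivial trivial
  set S := {r : ℝ | ∃ R : Set (X × Y), IsCorrespondence R ∧
    r = sSup {s : ℝ | ∃ a ∈ R, ∃ b ∈ R, s = |dist a.1 b.1 - dist a.2 b.2|}} with hS
  have hdGH : dGH X Y = (1 / 2) * sInf S := rfl
  have hTbdd : ∀ R : Set (X × Y),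
      BddAbove {s : ℝ | ∃ a ∈ R, ∃ b ∈ R, s = |dist a.1 b.1 - dist a.2 b.2|} := by
    intro R
    refine ⟨DX + DY, ?_⟩
    rintro s ⟨a, ha, b, hb, rfl⟩
    have h1 := hDX a.1 b.1
    have h2 := hDY a.2 b.2
    have h3 : (0:ℝ) ≤ dist a.1 b.1 := dist_nonneg
    have h4 : (0:ℝ) ≤ dist a.2 b.2 := dist_nonneg
    rw [abs_le]; constructor <;> linarith
  have hS0 : ∀ r ∈ S, 0 ≤ r := by
    rintro r ⟨R, hRc, rfl⟩
    obtain ⟨y, hy⟩ := hRc.1 (Classical.arbitrary X)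
    refine le_csSup (hTbdd R) ?_
    exact ⟨(Classical.arbitrary X, y), hy, (Classical.arbitrary X, y), hy, by simp⟩
  have hSbdd : BddBelow S := ⟨0, fun r hr => hS0 r hr⟩
  -- the common shape of the dI integrand and its nonnegativity
  have hF0 : ∀ (φ : X → Y) (ψ : Y → X), (0:ℝ) ≤
      max (max (⨆ x : X, ⨆ x' : X, (dist (φ x) (φ x') - dist x x'))
             (⨆ y : Y, ⨆ y' : Y, (dist (ψ y) (ψ y') - dist y y')))
        ((1 / 2) * max (⨆ x : X, dist x (ψ (φ x))) (⨆ y : Y, dist y (φ (ψ y)))) := by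
    intro φ ψ
    have h := (sup2_spec (fun x x' => dist (φ x) (φ x') - dist x x') DY
      (fun a b => le_trans (sub_le_self _ dist_nonneg) (hDY _ _))).1
    have h0 := h (Classical.arbitrary X) (Classical.arbitrary X)
    simp only [dist_self, sub_zero] at h0
    exact le_trans h0 (le_trans (le_max_left _ _) (le_max_left _ _))
  -- Part 1 : dGH ≤ each interleaving value
  have keyA : ∀ (φ : X → Y) (ψ : Y → X), dGH X Y ≤
      max (max (⨆ x : X, ⨆ x' : X, (dist (φ x) (φ x') - dist x x'))
             (⨆ y : Y, ⨆ y' : Y, (dist (ψ y) (ψ y') - dist y y')))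
        ((1 / 2) * max (⨆ x : X, dist x (ψ (φ x))) (⨆ y : Y, dist y (φ (ψ y)))) := by
    intro φ ψ
    set dφ := ⨆ x : X, ⨆ x' : X, (dist (φ x) (φ x') - dist x x') with hdφdef
    set dψ := ⨆ y : Y, ⨆ y' : Y, (dist (ψ y) (ψ y') - dist y y') with hdψdef
    set cX := ⨆ x : X, dist x (ψ (φ x)) with hcXdef
    set cY := ⨆ y : Y, dist y (φ (ψ y)) with hcYdef
    set M := max (max dφ dψ) ((1 / 2) * max cX cY) with hMdef
    obtain ⟨hdφ, -⟩ := sup2_spec (fun x x' => dist (φ x) (φ x') - dist x x') DY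
      (fun a b => le_trans (sub_le_self _ dist_nonneg) (hDY _ _))
    obtain ⟨hdψ, -⟩ := sup2_spec (fun y y' => dist (ψ y) (ψ y') - dist y y') DX
      (fun a b => le_trans (sub_le_self _ dist_nonneg) (hDX _ _))
    obtain ⟨hcX, -⟩ := sup1_spec (fun x => dist x (ψ (φ x))) DX (fun a => hDX _ _)
    obtain ⟨hcY, -⟩ := sup1_spec (fun y => dist y (φ (ψ y))) DY (fun a => hDY _ _)
    have hM0 : 0 ≤ M := hF0 φ ψ
    have hdφM : dφ ≤ M := le_trans (le_max_left _ _) (le_max_left _ _)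
    have hdψM : dψ ≤ M := le_trans (le_max_right _ _) (le_max_left _ _)
    have hCM : max cX cY ≤ 2 * M := by
      have : (1/2) * max cX cY ≤ M := le_max_right _ _
      linarith
    have hcXM : ∀ x, dist x (ψ (φ x)) ≤ 2 * M :=
      fun x => le_trans (le_trans (hcX x) (le_max_left _ _)) hCM
    have hcYM : ∀ y, dist y (φ (ψ y)) ≤ 2 * M :=
      fun y => le_trans (le_trans (hcY y) (le_max_right _ _)) hCM
    -- key distance comparisons
    have key1 : ∀ x x' : X, dist x x' ≤ dist (φ x) (φ x') + 2 * M := by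
      intro x x'
      have hd : (0:ℝ) ≤ dist (φ x) (φ x') := dist_nonneg
      have h1 := hcXM x
      have h2 := hcXM x'
      have h3 : dist (ψ (φ x)) (ψ (φ x')) ≤ dist (φ x) (φ x') + 2 * M := by
        have := hdψ (φ x) (φ x'); linarith
      have h4 := hX x (ψ (φ x)) x'
      have h5 := hX (ψ (φ x)) (ψ (φ x')) x'
      have h6 : dist (ψ (φ x')) x' ≤ 2 * M := by rw [dist_comm]; exact h2
      have h7 : dist (ψ (φ x)) x' ≤ dist (φ x) (φ x') + 2 * M :=
        h5.trans (max_le h3 (by linarith))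
      exact h4.trans (max_le (by linarith) h7)
    have key2 : ∀ y y' : Y, dist y y' ≤ dist (ψ y) (ψ y') + 2 * M := by
      intro y y'
      have hd : (0:ℝ) ≤ dist (ψ y) (ψ y') := dist_nonneg
      have h1 := hcYM y
      have h2 := hcYM y'
      have h3 : dist (φ (ψ y)) (φ (ψ y')) ≤ dist (ψ y) (ψ y') + 2 * M := by
        have := hdφ (ψ y) (ψ y'); linarith
      have h4 := hY y (φ (ψ y)) y'
      have h5 := hY (φ (ψ y)) (φ (ψ y')) y'
      have h6 : dist (φ (ψ y')) y' ≤ 2 * M := by rw [dist_comm]; exact h2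
      have h7 : dist (φ (ψ y)) y' ≤ dist (ψ y) (ψ y') + 2 * M :=
        h5.trans (max_le h3 (by linarith))
      exact h4.trans (max_le (by linarith) h7)
    have key3 : ∀ (x : X) (y : Y), dist (φ x) y ≤ dist x (ψ y) + 2 * M := by
      intro x y
      have hd : (0:ℝ) ≤ dist x (ψ y) := dist_nonneg
      have h1 : dist (φ x) (φ (ψ y)) ≤ dist x (ψ y) + 2 * M := by
        have := hdφ x (ψ y); linarith
      have h2 : dist (φ (ψ y)) y ≤ 2 * M := by rw [dist_comm]; exact hcYM y
      exact (hY (φ x) (φ (ψ y)) y).trans (max_le h1 (by linarith))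
    have key4 : ∀ (x : X) (y : Y), dist x (ψ y) ≤ dist (φ x) y + 2 * M := by
      intro x y
      have hd : (0:ℝ) ≤ dist (φ x) y := dist_nonneg
      have h1 := hcXM x
      have h2 : dist (ψ (φ x)) (ψ y) ≤ dist (φ x) y + 2 * M := by
        have := hdψ (φ x) y; linarith
      exact (hX x (ψ (φ x)) (ψ y)).trans (max_le (by linarith) h2)
    -- the correspondence built from φ and ψ
    set R : Set (X × Y) := {p | p.2 = φ p.1} ∪ {p | p.1 = ψ p.2} with hRdef
    have hRc : IsCorrespondence R :=
      ⟨fun x => ⟨φ x, Or.inl rfl⟩, fun y => ⟨ψ y, Or.inr rfl⟩⟩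
    have hbound : ∀ a ∈ R, ∀ b ∈ R, |dist a.1 b.1 - dist a.2 b.2| ≤ 2 * M := by
      rintro ⟨xa, ya⟩ (ha | ha) ⟨xb, yb⟩ (hb | hb) <;>
        simp only [Set.mem_setOf_eq] at ha hb <;> subst ha <;> subst hb <;>
        rw [abs_le] <;> constructor
      · -- (x, φ x), (x', φ x') lower
        have := hdφ xa xb; linarith
      · have := key1 xa xb; linarith
      · -- (x, φ x), (ψ y', y')
        have := key3 xa yb; linarith
      · have := key4 xa yb; linarith
      · -- (ψ y, y), (x', φ x')
        have := key3 xb ya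
        rw [dist_comm (φ xb) ya, dist_comm xb (ψ ya)] at this; linarith
      · have := key4 xb ya
        rw [dist_comm xb (ψ ya), dist_comm (φ xb) ya] at this; linarith
      · -- (ψ y, y), (ψ y', y')
        have := key2 ya yb; linarith
      · have := hdψ ya yb; linarith
    have hTne : ({s : ℝ | ∃ a ∈ R, ∃ b ∈ R, s = |dist a.1 b.1 - dist a.2 b.2|}).Nonempty := by
      obtain ⟨y, hy⟩ := hRc.1 (Classical.arbitrary X)
      exact ⟨_, ⟨(Classical.arbitrary X, y), hy, (Classical.arbitrary X, y), hy, rfl⟩⟩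
    have hsup : sSup {s : ℝ | ∃ a ∈ R, ∃ b ∈ R, s = |dist a.1 b.1 - dist a.2 b.2|} ≤ 2 * M := by
      refine csSup_le hTne ?_
      rintro s ⟨a, ha, b, hb, rfl⟩
      exact hbound a ha b hb
    have hmem : sSup {s : ℝ | ∃ a ∈ R, ∃ b ∈ R, s = |dist a.1 b.1 - dist a.2 b.2|} ∈ S :=
      ⟨R, hRc, rfl⟩
    have hinf : sInf S ≤ 2 * M := le_trans (csInf_le hSbdd hmem) hsup
    rw [hdGH]
    linarith
  -- Part 2 : dI ≤ each correspondence distortion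
  have keyB : ∀ r ∈ S, dI X Y ≤ r := by
    rintro r ⟨R, hRc, rfl⟩
    set T := {s : ℝ | ∃ a ∈ R, ∃ b ∈ R, s = |dist a.1 b.1 - dist a.2 b.2|} with hTdef
    have hr : ∀ a ∈ R, ∀ b ∈ R, |dist a.1 b.1 - dist a.2 b.2| ≤ sSup T :=
      fun a ha b hb => le_csSup (hTbdd R) ⟨a, ha, b, hb, rfl⟩
    have hr0 : 0 ≤ sSup T := hS0 _ ⟨R, hRc, rfl⟩
    choose φ hφ using hRc.1
    choose ψ hψ using hRc.2
    have hdφ : (⨆ x : X, ⨆ x' : X, (dist (φ x) (φ x') - dist x x')) ≤ sSup T := by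
      refine (sup2_spec _ (sSup T) ?_).2
      intro x x'
      have := hr (x, φ x) (hφ x) (x', φ x') (hφ x')
      simp only at this
      rw [abs_le] at this
      linarith [this.1]
    have hdψ : (⨆ y : Y, ⨆ y' : Y, (dist (ψ y) (ψ y') - dist y y')) ≤ sSup T := by
      refine (sup2_spec _ (sSup T) ?_).2
      intro y y'
      have := hr (ψ y, y) (hψ y) (ψ y', y') (hψ y')
      simp only at this
      rw [abs_le] at this
      linarith [this.2]
    have hcX : (⨆ x : X, dist x (ψ (φ x))) ≤ sSup T := by
      refine (sup1_spec _ (sSup T) ?_).2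
      intro x
      have := hr (x, φ x) (hφ x) (ψ (φ x), φ x) (hψ (φ x))
      simp only [dist_self, sub_zero] at this
      rwa [abs_of_nonneg dist_nonneg] at this
    have hcY : (⨆ y : Y, dist y (φ (ψ y))) ≤ sSup T := by
      refine (sup1_spec _ (sSup T) ?_).2
      intro y
      have := hr (ψ y, φ (ψ y)) (hφ (ψ y)) (ψ y, y) (hψ y)
      simp only [dist_self, zero_sub, abs_neg] at this
      rw [abs_of_nonneg dist_nonneg] at this
      rw [dist_comm]; exact this
    have hFle : max (max (⨆ x : X, ⨆ x' : X, (dist (φ x) (φ x') - dist x x'))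
             (⨆ y : Y, ⨆ y' : Y, (dist (ψ y) (ψ y') - dist y y')))
        ((1 / 2) * max (⨆ x : X, dist x (ψ (φ x))) (⨆ y : Y, dist y (φ (ψ y)))) ≤ sSup T := by
      refine max_le (max_le hdφ hdψ) ?_
      have : max (⨆ x : X, dist x (ψ (φ x))) (⨆ y : Y, dist y (φ (ψ y))) ≤ sSup T :=
        max_le hcX hcY
      linarith
    have hb1 : BddBelow (Set.range fun ψ' : Y → X =>
        max (max (⨆ x : X, ⨆ x' : X, (dist (φ x) (φ x') - dist x x'))
             (⨆ y : Y, ⨆ y' : Y, (dist (ψ' y) (ψ' y') - dist y y')))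
        ((1 / 2) * max (⨆ x : X, dist x (ψ' (φ x))) (⨆ y : Y, dist y (φ (ψ' y))))) :=
      ⟨0, by rintro _ ⟨ψ', rfl⟩; exact hF0 φ ψ'⟩
    have hb2 : BddBelow (Set.range fun φ' : X → Y => ⨅ ψ' : Y → X,
        max (max (⨆ x : X, ⨆ x' : X, (dist (φ' x) (φ' x') - dist x x'))
             (⨆ y : Y, ⨆ y' : Y, (dist (ψ' y) (ψ' y') - dist y y')))
        ((1 / 2) * max (⨆ x : X, dist x (ψ' (φ' x))) (⨆ y : Y, dist y (φ' (ψ' y))))) :=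
      ⟨0, by rintro _ ⟨φ', rfl⟩; exact le_ciInf (fun ψ' => hF0 φ' ψ')⟩
    calc dI X Y ≤ _ := ciInf_le hb2 φ
      _ ≤ _ := ciInf_le hb1 ψ
      _ ≤ sSup T := hFle
  have hSne : S.Nonempty := by
    refine ⟨_, ⟨Set.univ, ⟨fun x => ⟨Classical.arbitrary Y, trivial⟩,
      fun y => ⟨Classical.arbitrary X, trivial⟩⟩, rfl⟩⟩
  constructor
  · have h1 : dI X Y ≤ sInf S := le_csInf hSne keyB
    rw [hdGH]; linarith
  · exact le_ciInf (fun φ => le_ciInf (fun ψ => keyA φ ψ))
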